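/- Let (X̃, τ, A) be a soft e-locally compact space (soft e-Hausdorff, and every soft element x with soft neighborhood N admits a soft e-compact neighborhood K of x with K ⊆̃ N) such that pointwise intersections of members of τ lie in S(X̃). Then (X̃, τ, A) is a soft e-Baire space: for every countable family {F_i}_{i=1}^∞ of soft e-closed sets with soft interior equal to the null soft set, the elementary union ⋓_{i=1}^∞ F_i also has soft interior equal to the null soft set. -/

import Mathlib

namespace SoftE

/-- A soft set over `X` with parameter set `A`. -/
abbrev SoftSet (X A : Type*) := A → Set X

variable {X A : Type*}

/-- A soft element `x : A → X` belongs to a soft set `F`. -/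
def smem (x : A → X) (F : SoftSet X A) : Prop := ∀ α, x α ∈ F α

/-- The soft set generated by a collection of soft elements. -/
def SS (B : Set (A → X)) : SoftSet X A := fun α => {a | ∃ x ∈ B, x α = a}

/-- The null soft set. -/
def nullSoft (X A : Type*) : SoftSet X A := fun _ => ∅

/-- The absolute soft set. -/
def absSoft (X A : Type*) : SoftSet X A := fun _ => Set.univ

/-- Membership in `S(X̃)`: empty at every parameter, or nonempty at every parameter. -/
def InS (F : SoftSet X A) : Prop := (∀ α, F α = ∅) ∨ (∀ α, F α ≠ ∅)

/-- Soft subset: pointwise inclusion. -/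
def softSubset (F G : SoftSet X A) : Prop := ∀ α, F α ⊆ G α

/-- Elementary union of a set of soft sets. -/
def eUnionSet (s : Set (SoftSet X A)) : SoftSet X A := SS {x | ∃ F ∈ s, smem x F}

/-- Elementary union of an indexed family of soft sets. -/
def eUnionFam {ι : Type*} (F : ι → SoftSet X A) : SoftSet X A := SS {x | ∃ i, smem x (F i)}

/-- Binary elementary union. -/
def eUnion2 (F G : SoftSet X A) : SoftSet X A := SS {x | smem x F ∨ smem x G}

/-- Binary elementary intersection. -/
def eInter2 (F G : SoftSet X A) : SoftSet X A := SS {x | smem x F ∧ smem x G}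

/-- Elementary intersection of an indexed family of soft sets. -/
def eInterFam {ι : Type*} (F : ι → SoftSet X A) : SoftSet X A := SS {x | ∀ i, smem x (F i)}

/-- Elementary complement of a soft set. -/
def eCompl (F : SoftSet X A) : SoftSet X A := SS {x | ∀ α, x α ∉ F α}

/-- Relative (pointwise) complement of a soft set. -/
def relCompl (F : SoftSet X A) : SoftSet X A := fun α => (F α)ᶜ

/-- Relative complement inside a subset `Y ⊆ X`. -/
def relComplIn (Y : Set X) (F : SoftSet X A) : SoftSet X A := fun α => Y \ F α

/-- Elementary complement relative to `Y ⊆ X`. -/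
def eComplIn (Y : Set X) (F : SoftSet X A) : SoftSet X A :=
  SS {x | ∀ α, x α ∈ Y \ F α}

/-- A soft e-topology on the soft set `B`. -/
def IsETopologyOn (B : SoftSet X A) (τ : Set (SoftSet X A)) : Prop :=
  (∀ F ∈ τ, InS F ∧ softSubset F B) ∧
  nullSoft X A ∈ τ ∧ B ∈ τ ∧
  (∀ s ⊆ τ, eUnionSet s ∈ τ) ∧
  (∀ F ∈ τ, ∀ G ∈ τ, eInter2 F G ∈ τ)

/-- A soft e-topology on the absolute soft set `(X̃, A)`. -/
def IsETopology (τ : Set (SoftSet X A)) : Prop := IsETopologyOn (absSoft X A) τ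

/-- Soft e-closed set. -/
def IsEClosed (τ : Set (SoftSet X A)) (F : SoftSet X A) : Prop :=
  InS F ∧ InS (relCompl F) ∧ eCompl F ∈ τ

/-- Soft e-Hausdorff property relative to a base soft set `B`. -/
def IsEHausdorffOn (B : SoftSet X A) (τ : Set (SoftSet X A)) : Prop :=
  ∀ x y : A → X, smem x B → smem y B → (∀ α, x α ≠ y α) →
    ∃ F ∈ τ, ∃ G ∈ τ, smem x F ∧ smem y G ∧ ∀ α, F α ∩ G α = ∅

/-- Soft e-Hausdorff space. -/
def IsEHausdorff (τ : Set (SoftSet X A)) : Prop := IsEHausdorffOn (absSoft X A) τ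

/-- Soft e-quasi-compactness relative to a base soft set `B`. -/
def IsEQuasiCompactOn (B : SoftSet X A) (τ : Set (SoftSet X A)) : Prop :=
  ∀ s ⊆ τ, eUnionSet s = B → ∃ t ⊆ s, t.Finite ∧ eUnionSet t = B

/-- Soft e-quasi-compact space. -/
def IsEQuasiCompact (τ : Set (SoftSet X A)) : Prop :=
  IsEQuasiCompactOn (absSoft X A) τ

/-- Soft e-compact set. -/
def IsECompactSet (τ : Set (SoftSet X A)) (K : SoftSet X A) : Prop :=
  InS K ∧ InS (relCompl K) ∧
  ∀ s ⊆ τ, softSubset K (eUnionSet s) →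
    ∃ t ⊆ s, t.Finite ∧ softSubset K (eUnionSet t)

/-- The subspace soft e-topology `τ_Y`. -/
def subTop (τ : Set (SoftSet X A)) (Y : Set X) : Set (SoftSet X A) :=
  {G | ∃ O ∈ τ, G = fun α => O α ∩ Y}

/-- Soft neighborhood of a soft element. -/
def IsNbd (τ : Set (SoftSet X A)) (x : A → X) (N : SoftSet X A) : Prop :=
  N ≠ nullSoft X A ∧ ∃ G ∈ τ, smem x G ∧ softSubset G N

/-- Soft interior of a soft set. -/
def sInt (τ : Set (SoftSet X A)) (F : SoftSet X A) : SoftSet X A :=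
  SS {x | smem x F ∧ ∃ G ∈ τ, smem x G ∧ softSubset G F}

end SoftE

open SoftE

/-!
If the interior of `⋓ Fₙ` is nonnull, then some open `G₀` containing a soft element
lies inside `⋓ Fₙ`. Since `Fₙ` has null interior, every open `U` with a soft element meets the
open set `X̃ \ Fₙ` at some parameter, hence at every parameter because pointwise intersections of
open sets lie in `S(X̃)`; so local compactness yields a compact `Kₙ ⊆ U \ Fₙ`
containing an open `U'` with a soft element. Iterating from `G₀` gives compact sets
`G₀ ⊇ K₀ ⊇ K₁ ⊇ ⋯` with `Kₙ` disjoint from `Fₙ`; compact sets are closed in a Hausdorff space,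
so by compactness of `K₀` the `Kₙ` share a point, which lies in `G₀` but in no `Fₙ`.
-/

namespace SoftE

variable {X A : Type*} {τ : Set (SoftSet X A)}

def IsELocallyCompact (τ : Set (SoftSet X A)) : Prop :=
  ∀ (x : A → X) (N : SoftSet X A), IsNbd τ x N →
    ∃ K : SoftSet X A, IsECompactSet τ K ∧ IsNbd τ x K ∧ softSubset K N

lemma smem_SS {B : Set (A → X)} {x : A → X} (hx : x ∈ B) : smem x (SS B) :=
  fun _ => ⟨x, hx, rfl⟩

lemma ne_nullSoft_of_smem [Nonempty A] {x : A → X} {F : SoftSet X A} (hx : smem x F) :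
    F ≠ nullSoft X A := by
  rintro rfl
  exact hx (Classical.arbitrary A)

lemma InS.exists_smem_eq {F : SoftSet X A} (hF : InS F) {β : A} {b : X} (hb : b ∈ F β) :
    ∃ w, smem w F ∧ w β = b := by
  classical
  have hne : ∀ γ, (F γ).Nonempty := by
    rcases hF with h | h
    · exact absurd hb (by simp [h β])
    · exact fun γ => Set.nonempty_iff_ne_empty.2 (h γ)
  refine ⟨fun γ => if γ = β then b else (hne γ).some, fun γ => ?_, if_pos rfl⟩
  by_cases hγ : γ = β
  · subst hγ; simpa using hb
  · simpa [hγ] using (hne γ).some_mem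

lemma SS_setOf_smem {F : SoftSet X A} (hF : InS F) : SS {x | smem x F} = F := by
  funext α; ext a
  refine ⟨?_, fun ha => hF.exists_smem_eq ha⟩
  rintro ⟨x, hx, rfl⟩
  exact hx α

lemma eCompl_eq_relCompl {F : SoftSet X A} (hF : InS (relCompl F)) : eCompl F = relCompl F :=
  SS_setOf_smem hF

lemma subset_eUnionSet {s : Set (SoftSet X A)} {F : SoftSet X A} (hF : InS F) (hs : F ∈ s) :
    softSubset F (eUnionSet s) := fun _ _ hb =>
  let ⟨w, hw, hwb⟩ := hF.exists_smem_eq hb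
  ⟨w, ⟨F, hs, hw⟩, hwb⟩

lemma exists_mem_of_mem_eUnionSet {s : Set (SoftSet X A)} {β : A} {a : X}
    (ha : a ∈ eUnionSet s β) : ∃ F ∈ s, a ∈ F β := by
  obtain ⟨x, ⟨F, hF, hx⟩, rfl⟩ := ha
  exact ⟨F, hF, hx β⟩

lemma eInter2_subset_left (F G : SoftSet X A) : softSubset (eInter2 F G) F := by
  rintro α _ ⟨x, hx, rfl⟩
  exact hx.1 α

lemma eInter2_subset_right (F G : SoftSet X A) : softSubset (eInter2 F G) G := by
  rintro α _ ⟨x, hx, rfl⟩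
  exact hx.2 α

lemma IsEClosed.relCompl_mem {F : SoftSet X A} (hF : IsEClosed τ F) : relCompl F ∈ τ :=
  eCompl_eq_relCompl hF.2.1 ▸ hF.2.2

namespace IsETopology

lemma mem_of_forall_smem {S : SoftSet X A} (hτ : IsETopology τ) (hS : InS S)
    (h : ∀ y, smem y S → ∃ O ∈ τ, smem y O ∧ softSubset O S) : S ∈ τ := by
  have hS_eq : S = eUnionSet {O | O ∈ τ ∧ softSubset O S} := by
    funext α; ext a
    constructor
    · intro ha
      obtain ⟨y, hy, rfl⟩ := hS.exists_smem_eq ha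
      obtain ⟨O, hO, hyO, hOS⟩ := h y hy
      exact ⟨y, ⟨O, ⟨hO, hOS⟩, hyO⟩, rfl⟩
    · intro ha
      obtain ⟨O, ⟨-, hOS⟩, haO⟩ := exists_mem_of_mem_eUnionSet ha
      exact hOS α haO
  rw [hS_eq]
  exact hτ.2.2.2.1 _ fun _ hO => hO.1

lemma exists_smem_subset_of_finite (hτ : IsETopology τ) {t : Set (SoftSet X A)}
    (ht : t.Finite) (htτ : t ⊆ τ) {y : A → X} (hy : ∀ H ∈ t, smem y H) :
    ∃ O ∈ τ, smem y O ∧ ∀ H ∈ t, softSubset O H := by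
  induction t, ht using Set.Finite.induction_on with
  | empty => exact ⟨absSoft X A, hτ.2.2.1, fun _ => trivial, by simp⟩
  | @insert H t _ _ ih =>
    obtain ⟨O, hO, hyO, hOt⟩ := ih (fun G hG => htτ (Or.inr hG)) (fun G hG => hy G (Or.inr hG))
    refine ⟨eInter2 O H, hτ.2.2.2.2 O hO H (htτ (Or.inl rfl)),
      smem_SS ⟨hyO, hy H (Or.inl rfl)⟩, ?_⟩
    rintro G (rfl | hG)
    · exact eInter2_subset_right O G
    · exact fun α => (eInter2_subset_left O H α).trans (hOt G hG α)

lemma exists_smem_subset_relCompl (hτ : IsETopology τ) (hH : IsEHausdorff τ)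
    {K : SoftSet X A} (hK : IsECompactSet τ K) {y : A → X} (hy : smem y (relCompl K)) :
    ∃ O ∈ τ, smem y O ∧ softSubset O (relCompl K) := by
  set 𝒢 := {G | G ∈ τ ∧ ∃ H ∈ τ, smem y H ∧ ∀ β, Disjoint (G β) (H β)}
  have hcover : softSubset K (eUnionSet 𝒢) := by
    intro β b hb
    obtain ⟨w, hw, rfl⟩ := hK.1.exists_smem_eq hb
    obtain ⟨G, hG, H, hHτ, hwG, hyH, hGH⟩ :=
      hH w y (fun _ => trivial) (fun _ => trivial) fun γ hwy => hy γ (hwy ▸ hw γ)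
    exact ⟨w, ⟨G, ⟨hG, H, hHτ, hyH, fun β => Set.disjoint_iff_inter_eq_empty.2 (hGH β)⟩, hwG⟩,
      rfl⟩
  obtain ⟨t, ht𝒢, ht, htK⟩ := hK.2.2 𝒢 (fun _ hG => hG.1) hcover
  choose! Hf hHf hyHf hGHf using fun G (hG : G ∈ t) => (ht𝒢 hG).2
  obtain ⟨O, hO, hyO, hOH⟩ := hτ.exists_smem_subset_of_finite (ht.image Hf)
    (Set.image_subset_iff.2 hHf) (Set.forall_mem_image.2 hyHf)
  refine ⟨O, hO, hyO, fun β a haO haK => ?_⟩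
  obtain ⟨G, hG, haG⟩ := exists_mem_of_mem_eUnionSet (htK β haK)
  exact Set.disjoint_left.1 (hGHf G hG β) haG (hOH _ ⟨G, hG, rfl⟩ β haO)

lemma isEClosed_of_isECompactSet (hτ : IsETopology τ) (hH : IsEHausdorff τ)
    {K : SoftSet X A} (hK : IsECompactSet τ K) : IsEClosed τ K :=
  ⟨hK.1, hK.2.1, eCompl_eq_relCompl hK.2.1 ▸
    hτ.mem_of_forall_smem hK.2.1 fun _ hy => hτ.exists_smem_subset_relCompl hH hK hy⟩

end IsETopology

/-- Cantor's intersection theorem. -/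
lemma exists_nonempty_iInter_of_antitone {K : ℕ → SoftSet X A} (hK₀ : IsECompactSet τ (K 0))
    (hK : ∀ n, IsEClosed τ (K n)) (hanti : ∀ γ, Antitone fun n => K n γ) {α₀ : A}
    (hne : ∀ n, (K n α₀).Nonempty) : ∃ γ, (⋂ n, K n γ).Nonempty := by
  by_contra! hempty
  have hcover : softSubset (K 0) (eUnionSet ((fun n => relCompl (K n)) '' Set.univ)) := by
    intro β b _
    obtain ⟨n, hbn⟩ : ∃ n, b ∉ K n β := by
      simpa using Set.eq_empty_iff_forall_notMem.1 (hempty β) b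
    exact subset_eUnionSet (hK n).2.1
      (Set.mem_image_of_mem (fun n => relCompl (K n)) (Set.mem_univ n)) β hbn
  obtain ⟨t, -, ht, htK⟩ := Set.exists_subset_image_finite_and.1 <|
    hK₀.2.2 _ (Set.image_subset_iff.2 fun n _ => (hK n).relCompl_mem) hcover
  obtain ⟨N, hN⟩ := ht.bddAbove
  obtain ⟨b, hb⟩ := hne N
  obtain ⟨_, ⟨n, hn, rfl⟩, hbn⟩ := exists_mem_of_mem_eUnionSet (htK α₀ (hanti α₀ N.zero_le hb))
  exact hbn (hanti α₀ (hN hn) hb)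

lemma exists_smem_relCompl_of_sInt_eq_nullSoft [Nonempty A]
    (hint : ∀ O₁ ∈ τ, ∀ O₂ ∈ τ, InS (fun α => O₁ α ∩ O₂ α)) {U F : SoftSet X A} (hU : U ∈ τ)
    {x : A → X} (hxU : smem x U) (hF : IsEClosed τ F) (hFint : sInt τ F = nullSoft X A) :
    ∃ y, smem y U ∧ smem y (relCompl F) := by
  obtain ⟨γ, a, haU, haF⟩ : ∃ γ, ∃ a ∈ U γ, a ∉ F γ := by
    by_contra! hUF
    have hx : smem x (sInt τ F) := smem_SS ⟨fun α => hUF α _ (hxU α), U, hU, hxU, hUF⟩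
    exact ne_nullSoft_of_smem hx hFint
  obtain ⟨y, hy, -⟩ := (hint U hU _ hF.relCompl_mem).exists_smem_eq
    (show a ∈ U γ ∩ relCompl F γ from ⟨haU, haF⟩)
  exact ⟨y, fun α => (hy α).1, fun α => (hy α).2⟩

lemma IsELocallyCompact.exists_isECompactSet_subset_relCompl [Nonempty A]
    (hloc : IsELocallyCompact τ) (hτ : IsETopology τ)
    (hint : ∀ O₁ ∈ τ, ∀ O₂ ∈ τ, InS (fun α => O₁ α ∩ O₂ α)) {U F : SoftSet X A} (hU : U ∈ τ)
    {x : A → X} (hxU : smem x U) (hF : IsEClosed τ F) (hFint : sInt τ F = nullSoft X A) :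
    ∃ K, IsECompactSet τ K ∧ softSubset K U ∧ softSubset K (relCompl F) ∧
      ∃ U' ∈ τ, (∃ x', smem x' U') ∧ softSubset U' K := by
  obtain ⟨y, hyU, hyF⟩ := exists_smem_relCompl_of_sInt_eq_nullSoft hint hU hxU hF hFint
  have hV : eInter2 U (relCompl F) ∈ τ := hτ.2.2.2.2 U hU _ hF.relCompl_mem
  have hyV : smem y (eInter2 U (relCompl F)) := smem_SS ⟨hyU, hyF⟩
  obtain ⟨K, hK, ⟨-, U', hU', hyU', hU'K⟩, hKV⟩ :=
    hloc y _ ⟨ne_nullSoft_of_smem hyV, _, hV, hyV, fun _ => subset_rfl⟩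
  exact ⟨K, hK, fun α => (hKV α).trans (eInter2_subset_left _ _ α),
    fun α => (hKV α).trans (eInter2_subset_right _ _ α), U', hU', ⟨y, hyU'⟩, hU'K⟩

theorem exists_mem_forall_notMem_of_sInt_eq_nullSoft [Nonempty A] (hτ : IsETopology τ)
    (hH : IsEHausdorff τ) (hint : ∀ O₁ ∈ τ, ∀ O₂ ∈ τ, InS (fun α => O₁ α ∩ O₂ α))
    (hloc : IsELocallyCompact τ) {F : ℕ → SoftSet X A} (hF : ∀ n, IsEClosed τ (F n))
    (hFint : ∀ n, sInt τ (F n) = nullSoft X A) {G : SoftSet X A} (hG : G ∈ τ) {x : A → X}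
    (hxG : smem x G) : ∃ γ, ∃ a ∈ G γ, ∀ n, a ∉ F n γ := by
  let P := {U : SoftSet X A // U ∈ τ ∧ ∃ x, smem x U}
  have step : ∀ n (U : P), ∃ K, ∃ U' : P, IsECompactSet τ K ∧ softSubset K U.1 ∧
      softSubset K (relCompl (F n)) ∧ softSubset U'.1 K := by
    rintro n ⟨U, hU, x, hxU⟩
    obtain ⟨K, hK, hKU, hKF, U', hU', hx', hU'K⟩ :=
      hloc.exists_isECompactSet_subset_relCompl hτ hint hU hxU (hF n) (hFint n)
    exact ⟨K, ⟨U', hU', hx'⟩, hK, hKU, hKF, hU'K⟩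
  choose K U' hK hKU hKF hU'K using step
  let U : ℕ → P := fun n => Nat.rec ⟨G, hG, x, hxG⟩ (fun n Un => U' n Un) n
  have hanti : ∀ γ, Antitone fun n => K n (U n) γ := fun γ =>
    antitone_nat_of_succ_le fun n => (hKU (n + 1) (U (n + 1)) γ).trans (hU'K n (U n) γ)
  have hne : ∀ n, (K n (U n) (Classical.arbitrary A)).Nonempty := fun n =>
    let ⟨x', hx'⟩ := (U (n + 1)).2.2
    ⟨x' _, hU'K n (U n) _ (hx' _)⟩
  obtain ⟨γ, a, ha⟩ := exists_nonempty_iInter_of_antitone (hK 0 (U 0))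
    (fun n => hτ.isEClosed_of_isECompactSet hH (hK n (U n))) hanti hne
  rw [Set.mem_iInter] at ha
  exact ⟨γ, a, hKU 0 (U 0) γ (ha 0), fun n => hKF n (U n) γ (ha n)⟩

end SoftE

/-- a soft e-locally compact space (with pointwise intersections
of open sets in `S(X̃)`) is a soft e-Baire space. -/
theorem stmt16 {X A : Type*}
    (τ : Set (SoftSet X A)) (hτ : IsETopology τ) (hH : IsEHausdorff τ)
    (hint : ∀ O₁ ∈ τ, ∀ O₂ ∈ τ, InS (fun α => O₁ α ∩ O₂ α))
    (hloc : ∀ (x : A → X) (N : SoftSet X A), IsNbd τ x N →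
      ∃ K : SoftSet X A, IsECompactSet τ K ∧ IsNbd τ x K ∧ softSubset K N) :
    ∀ F : ℕ → SoftSet X A, (∀ i, IsEClosed τ (F i)) →
      (∀ i, sInt τ (F i) = nullSoft X A) →
      sInt τ (eUnionFam F) = nullSoft X A := by
  intro F hF hFint
  by_contra hne
  obtain ⟨α₀, a₀, ha₀⟩ : ∃ α a, a ∈ sInt τ (eUnionFam F) α := by
    by_contra! h
    exact hne (funext fun α => Set.eq_empty_iff_forall_notMem.2 (h α))
  have : Nonempty A := ⟨α₀⟩
  obtain ⟨x₀, ⟨-, G, hG, hx₀G, hGF⟩, -⟩ := ha₀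
  obtain ⟨γ, a, haG, haF⟩ :=
    exists_mem_forall_notMem_of_sInt_eq_nullSoft hτ hH hint hloc hF hFint hG hx₀G
  obtain ⟨z, ⟨n, hz⟩, rfl⟩ := hGF γ haG
  exact haF n (hz γ)
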